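/- For t > 0, a positive integer q and 1 ≤ n ≤ q−1, the integral I over the infinite hyperbolic cone C_q of K_ℍ(t, d(z, γ_qⁿ z)) dμ(z) equals (e^{−t/4}/(q√(16πt))) ∫₀^∞ e^{−u²/(4t)} cosh(u/2)/(sinh²(u/2) + sin²(nπ/q)) du, where d(z,γ_qⁿ z) = arccosh(1 + 2sin²(nπ/q)sinh²(ρ)) for z at radius ρ. -/

import Mathlib

open Real MeasureTheory

/-- arccosh(x) = log(x + √(x²−1)). -/
noncomputable def arcosh (x : ℝ) : ℝ := Real.log (x + Real.sqrt (x ^ 2 - 1))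

/-- The real-time heat kernel on the hyperbolic plane, for `d > 0`. -/
noncomputable def heatKernelR (t : ℝ) (d : ℝ) : ℝ :=
  Real.sqrt 2 * Real.exp (-t / 4) / (4 * Real.pi * t) ^ ((3 : ℝ) / 2) *
    ∫ u in Set.Ioi d,
      u * Real.exp (-u ^ 2 / (4 * t)) / Real.sqrt (Real.cosh u - Real.cosh d)

/-!
Write `s = sin (nπ/q) > 0`, so that `cosh d = 1 + 2 s² sinh² ρ`; the `θ`-integral only contributes
a factor `2π`. Inserting the integral defining `K_ℍ(t, d)` and exchanging the `ρ`- and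
`u`-integrals (the integrand is nonnegative), the inner integral becomes, with `a = sinh (u/2)`
(so that `cosh u - 1 = 2a²`), `∫ sinh ρ / √(2 (a² - s² sinh² ρ)) dρ` over `s sinh ρ < a`, which is
elementary and equals `arctan (a/s) / (√2 s)`. Integrating by parts against
`u e^{-u²/4t} = -2t ∂ᵤ e^{-u²/4t}` replaces `arctan (sinh (u/2) / s)` by its derivative
`s cosh (u/2) / (2 (sinh² (u/2) + s²))`, which gives the right-hand side.
-/

open Set Filter Topology

lemma arcosh_eq_real_arcosh : _root_.arcosh = Real.arcosh := rfl

lemma div_sqrt_sub_eq_zero_of_le {x y : ℝ} (a : ℝ) (h : x ≤ y) : a / √(x - y) = 0 := by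
  rw [sqrt_eq_zero'.mpr (by linarith), div_zero]

/-- Since `√` of a negative number is `0` and so is division by `0`, the integrand of
`heatKernelR t d` vanishes on `(0, d]`: the integral may be taken over `(0, ∞)`. -/
lemma heatKernelR_arcosh {x : ℝ} (hx : 1 ≤ x) (t : ℝ) :
    heatKernelR t (_root_.arcosh x) = √2 * exp (-t / 4) / (4 * π * t) ^ ((3 : ℝ) / 2) *
      ∫ u in Ioi 0, u * exp (-u ^ 2 / (4 * t)) / √(cosh u - x) := by
  rw [heatKernelR, arcosh_eq_real_arcosh, cosh_arcosh hx,
    setIntegral_eq_of_subset_of_forall_sdiff_eq_zero measurableSet_Ioi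
      (Ioi_subset_Ioi (arcosh_nonneg hx))]
  rintro u ⟨hu, hud⟩
  refine div_sqrt_sub_eq_zero_of_le _ ?_
  rw [← cosh_arcosh hx, cosh_le_cosh, abs_of_pos hu, abs_of_nonneg (arcosh_nonneg hx)]
  exact not_lt.mp hud

lemma cosh_eq_one_add_two_mul_sinh_half_sq (u : ℝ) : cosh u = 1 + 2 * sinh (u / 2) ^ 2 := by
  calc cosh u = cosh (2 * (u / 2)) := by ring_nf
    _ = 1 + 2 * sinh (u / 2) ^ 2 := by rw [cosh_two_mul, cosh_sq]; ring

lemma integral_integral_swap_of_nonneg {α β : Type*} [MeasurableSpace α] [MeasurableSpace β]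
    {μ : Measure α} {ν : Measure β} [SFinite μ] [SFinite ν] {f : α → β → ℝ}
    (hf : AEStronglyMeasurable (Function.uncurry f) (μ.prod ν))
    (hf_nonneg : ∀ᵐ y ∂ν, ∀ᵐ x ∂μ, 0 ≤ f x y)
    (hf_sec : ∀ᵐ y ∂ν, Integrable (fun x => f x y) μ)
    (hf_int : Integrable (fun y => ∫ x, f x y ∂μ) ν) :
    ∫ x, ∫ y, f x y ∂ν ∂μ = ∫ y, ∫ x, f x y ∂μ ∂ν := by
  refine integral_integral_swap ((integrable_prod_iff' hf).2 ⟨hf_sec, hf_int.congr ?_⟩)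
  filter_upwards [hf_nonneg] with y hy
  exact integral_congr_ae (hy.mono fun x hx => (Real.norm_of_nonneg hx).symm)

lemma hasDerivAt_neg_arctan_sqrt_div (a : ℝ) {s ρ : ℝ} (hs : 0 < s)
    (hw : 0 < a ^ 2 - (s * sinh ρ) ^ 2) :
    HasDerivAt (fun ρ => -arctan (√(a ^ 2 - (s * sinh ρ) ^ 2) / (s * cosh ρ)) / s)
      (sinh ρ / √(a ^ 2 - (s * sinh ρ) ^ 2)) ρ := by
  have hw' : HasDerivAt (fun ρ => a ^ 2 - (s * sinh ρ) ^ 2)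
      (-(2 * (s * sinh ρ) * (s * cosh ρ))) ρ := by
    simpa using ((hasDerivAt_sinh ρ).const_mul s).pow 2 |>.const_sub (a ^ 2)
  refine (((hw'.sqrt hw.ne').div ((hasDerivAt_cosh ρ).const_mul s)
    (by positivity)).arctan.neg.div_const s).congr_deriv ?_
  have hsqrt : 0 < √(a ^ 2 - (s * sinh ρ) ^ 2) := sqrt_pos.mpr hw
  have hcosh : 0 < cosh ρ := cosh_pos ρ
  simp only [Pi.div_apply]
  field_simp
  ring

lemma continuous_neg_arctan_sqrt_div (a : ℝ) {s : ℝ} (hs : 0 < s) :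
    Continuous fun ρ => -arctan (√(a ^ 2 - (s * sinh ρ) ^ 2) / (s * cosh ρ)) / s := by
  have : ∀ ρ, s * cosh ρ ≠ 0 := fun ρ => (mul_pos hs (cosh_pos ρ)).ne'
  fun_prop (disch := assumption)

lemma sq_sub_mul_sinh_sq_pos {a s ρ : ℝ} (hs : 0 < s) (hρ : ρ ∈ Ioo 0 (arsinh (a / s))) :
    0 < a ^ 2 - (s * sinh ρ) ^ 2 := by
  have h₀ : 0 < s * sinh ρ := mul_pos hs (sinh_pos_iff.mpr hρ.1)
  have h₁ : s * sinh ρ < a := by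
    rw [← lt_div_iff₀' hs, ← sinh_arsinh (a / s), sinh_lt_sinh]; exact hρ.2
  nlinarith

lemma sinh_div_sqrt_eq_zero {a s ρ : ℝ} (hs : 0 < s) (ha : 0 ≤ a)
    (hρ : arsinh (a / s) ≤ ρ) :
    sinh ρ / √(a ^ 2 - (s * sinh ρ) ^ 2) = 0 := by
  refine div_sqrt_sub_eq_zero_of_le _ (pow_le_pow_left₀ ha ?_ 2)
  rw [← div_le_iff₀' hs, ← sinh_arsinh (a / s), sinh_le_sinh]; exact hρ

lemma integrableOn_sinh_div_sqrt {a s : ℝ} (hs : 0 < s) (ha : 0 < a) :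
    IntegrableOn (fun ρ => sinh ρ / √(a ^ 2 - (s * sinh ρ) ^ 2)) (Ioi 0) := by
  refine IntegrableOn.of_forall_sdiff_eq_zero (s := Ioc 0 (arsinh (a / s))) ?_ measurableSet_Ioi
    fun ρ hρ => sinh_div_sqrt_eq_zero hs ha.le (not_lt.mp fun h => hρ.2 ⟨hρ.1, h.le⟩)
  exact intervalIntegral.integrableOn_deriv_of_nonneg
    (continuous_neg_arctan_sqrt_div a hs).continuousOn
    (fun ρ hρ => hasDerivAt_neg_arctan_sqrt_div a hs (sq_sub_mul_sinh_sq_pos hs hρ))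
    (fun ρ hρ => div_nonneg (sinh_nonneg_iff.mpr hρ.1.le) (sqrt_nonneg _))

lemma integral_sinh_div_sqrt {a s : ℝ} (hs : 0 < s) (ha : 0 < a) :
    ∫ ρ in Ioi 0, sinh ρ / √(a ^ 2 - (s * sinh ρ) ^ 2) = arctan (a / s) / s := by
  have hR : 0 ≤ arsinh (a / s) := arsinh_nonneg_iff.mpr (div_pos ha hs).le
  rw [setIntegral_eq_of_subset_of_forall_sdiff_eq_zero measurableSet_Ioi Ioc_subset_Ioi_self
    fun ρ hρ => sinh_div_sqrt_eq_zero hs ha.le (not_lt.mp fun h => hρ.2 ⟨hρ.1, h.le⟩),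
    ← intervalIntegral.integral_of_le hR,
    intervalIntegral.integral_eq_sub_of_hasDerivAt_of_le hR
      (continuous_neg_arctan_sqrt_div a hs).continuousOn
      (fun ρ hρ => hasDerivAt_neg_arctan_sqrt_div a hs (sq_sub_mul_sinh_sq_pos hs hρ))
      ((intervalIntegrable_iff_integrableOn_Ioc_of_le hR).mpr
        ((integrableOn_sinh_div_sqrt hs ha).mono_set Ioc_subset_Ioi_self))]
  have hsR : s * sinh (arsinh (a / s)) = a := by rw [sinh_arsinh]; field_simp
  rw [hsR]
  simp [sqrt_sq ha.le, neg_div]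

lemma integrable_exp_neg_sq_div_mul_cosh {t : ℝ} (ht : 0 < t) (c : ℝ) :
    Integrable fun u => exp (-u ^ 2 / (4 * t)) * cosh (c * u) := by
  have hG := integrable_exp_neg_mul_sq (b := (4 * t)⁻¹) (by positivity)
  refine (((hG.comp_sub_right (2 * c * t)).add (hG.comp_add_right (2 * c * t))).const_mul
    (exp (c ^ 2 * t) / 2)).congr (Eventually.of_forall fun u => ?_)
  have h₁ : exp (c ^ 2 * t) * exp (-(4 * t)⁻¹ * (u - 2 * c * t) ^ 2)
      = exp (-u ^ 2 / (4 * t)) * exp (c * u) := by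
    rw [← exp_add, ← exp_add]; congr 1; field_simp; ring
  have h₂ : exp (c ^ 2 * t) * exp (-(4 * t)⁻¹ * (u + 2 * c * t) ^ 2)
      = exp (-u ^ 2 / (4 * t)) * exp (-(c * u)) := by
    rw [← exp_add, ← exp_add]; congr 1; field_simp; ring
  simp only [Pi.add_apply, cosh_eq]
  linear_combination (h₁ + h₂) / 2

lemma integrable_mul_exp_neg_sq_div {t : ℝ} (ht : 0 < t) :
    Integrable fun u => u * exp (-u ^ 2 / (4 * t)) := by
  refine (integrable_mul_exp_neg_mul_sq (b := (4 * t)⁻¹) (by positivity)).congr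
    (Eventually.of_forall fun u => ?_)
  ring_nf

lemma tendsto_exp_neg_sq_div_atTop {t : ℝ} (ht : 0 < t) :
    Tendsto (fun u => exp (-u ^ 2 / (4 * t))) atTop (𝓝 0) :=
  tendsto_exp_atBot.comp <| (tendsto_neg_atTop_atBot.comp
    (tendsto_pow_atTop two_ne_zero)).atBot_div_const (by positivity)

lemma hasDerivAt_exp_neg_sq_div (t u : ℝ) :
    HasDerivAt (fun u => exp (-u ^ 2 / (4 * t))) (-(u / (2 * t)) * exp (-u ^ 2 / (4 * t))) u := by
  have h : HasDerivAt (fun u => -u ^ 2 / (4 * t)) (-(2 * u) / (4 * t)) u := by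
    simpa using (hasDerivAt_pow 2 u).neg.div_const (4 * t)
  refine h.exp.congr_deriv ?_
  ring

lemma integrableOn_mul_exp_neg_sq_div_mul {t M : ℝ} (ht : 0 < t) {h : ℝ → ℝ}
    (hh : ContinuousOn h (Ioi 0)) (hM : ∀ u ∈ Ioi 0, |h u| ≤ M) :
    IntegrableOn (fun u => u * exp (-u ^ 2 / (4 * t)) * h u) (Ioi 0) :=
  (integrable_mul_exp_neg_sq_div ht).integrableOn.mul_bdd
    (hh.aestronglyMeasurable measurableSet_Ioi) ((ae_restrict_iff' measurableSet_Ioi).mpr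
      (Eventually.of_forall hM))

lemma integral_mul_exp_neg_sq_div_mul {t M : ℝ} (ht : 0 < t) {h h' : ℝ → ℝ}
    (hcont : ContinuousWithinAt h (Ici 0) 0) (hderiv : ∀ u ∈ Ioi 0, HasDerivAt h (h' u) u)
    (hM : ∀ u ∈ Ioi 0, |h u| ≤ M)
    (hint : IntegrableOn (fun u => exp (-u ^ 2 / (4 * t)) * h' u) (Ioi 0)) :
    ∫ u in Ioi 0, u * exp (-u ^ 2 / (4 * t)) * h u
      = 2 * t * (h 0 + ∫ u in Ioi 0, exp (-u ^ 2 / (4 * t)) * h' u) := by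
  have hF : ∀ u ∈ Ioi (0 : ℝ), HasDerivAt (fun u => -(2 * t) * (exp (-u ^ 2 / (4 * t)) * h u))
      (u * exp (-u ^ 2 / (4 * t)) * h u - 2 * t * (exp (-u ^ 2 / (4 * t)) * h' u)) u :=
    fun u hu => by
      refine (((hasDerivAt_exp_neg_sq_div t u).mul (hderiv u hu)).const_mul
        (-(2 * t))).congr_deriv ?_
      field_simp
      ring
  have hlim : Tendsto (fun u => -(2 * t) * (exp (-u ^ 2 / (4 * t)) * h u)) atTop (𝓝 0) := by
    refine squeeze_zero_norm' ?_ (by simpa using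
      (tendsto_exp_neg_sq_div_atTop ht).const_mul (2 * t * M))
    filter_upwards [Ioi_mem_atTop 0] with u hu
    rw [norm_mul, norm_mul, norm_neg, Real.norm_of_nonneg (by positivity : 0 ≤ 2 * t),
      Real.norm_of_nonneg (exp_pos _).le, Real.norm_eq_abs]
    have := mul_le_mul_of_nonneg_left (hM u hu)
      (by positivity : 0 ≤ 2 * t * exp (-u ^ 2 / (4 * t)))
    linarith
  have hI := integrableOn_mul_exp_neg_sq_div_mul ht
    (fun u hu => (hderiv u hu).continuousAt.continuousWithinAt) hM
  have hF0 : ContinuousWithinAt (fun u => -(2 * t) * (exp (-u ^ 2 / (4 * t)) * h u)) (Ici 0) 0 :=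
    continuousWithinAt_const.mul ((by fun_prop : Continuous fun u : ℝ =>
      exp (-u ^ 2 / (4 * t))).continuousWithinAt.mul hcont)
  have hFTC := integral_Ioi_of_hasDerivAt_of_tendsto hF0 hF (hI.sub (hint.const_mul (2 * t))) hlim
  rw [integral_sub hI (hint.const_mul (2 * t)), integral_const_mul] at hFTC
  norm_num at hFTC
  linear_combination hFTC

lemma abs_arctan_le (x : ℝ) : |arctan x| ≤ π / 2 :=
  abs_le.mpr ⟨(arctan_mem_Ioo x).1.le, (arctan_mem_Ioo x).2.le⟩

lemma integrable_exp_neg_sq_div_mul_cosh_div {t : ℝ} (ht : 0 < t) {s : ℝ} (hs : 0 < s) :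
    Integrable fun u => exp (-u ^ 2 / (4 * t)) * cosh (u / 2) / (sinh (u / 2) ^ 2 + s ^ 2) := by
  refine ((integrable_exp_neg_sq_div_mul_cosh ht (1 / 2)).div_const (s ^ 2)).mono'
    (by fun_prop : Measurable _).aestronglyMeasurable (Eventually.of_forall fun u => ?_)
  rw [Real.norm_of_nonneg (by positivity), one_div_mul_eq_div]
  gcongr
  nlinarith [sq_nonneg (sinh (u / 2))]

lemma hasDerivAt_arctan_sinh_half_div {s : ℝ} (hs : 0 < s) (u : ℝ) :
    HasDerivAt (fun u => arctan (sinh (u / 2) / s))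
      (s / 2 * (cosh (u / 2) / (sinh (u / 2) ^ 2 + s ^ 2))) u := by
  have h : HasDerivAt (fun u => sinh (u / 2) / s) (cosh (u / 2) * (1 / 2) / s) u :=
    ((hasDerivAt_id' u).div_const 2).sinh.div_const s
  refine h.arctan.congr_deriv ?_
  field_simp
  ring

lemma integral_mul_exp_neg_sq_div_mul_arctan {t : ℝ} (ht : 0 < t) {s : ℝ} (hs : 0 < s) :
    ∫ u in Ioi 0, u * exp (-u ^ 2 / (4 * t)) * arctan (sinh (u / 2) / s)
      = t * s *
        ∫ u in Ioi 0, exp (-u ^ 2 / (4 * t)) * cosh (u / 2) / (sinh (u / 2) ^ 2 + s ^ 2) := by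
  have hint := ((integrable_exp_neg_sq_div_mul_cosh_div ht hs).const_mul (s / 2)).integrableOn
    (s := Ioi 0)
  rw [integral_mul_exp_neg_sq_div_mul ht (by fun_prop)
    (fun u _ => hasDerivAt_arctan_sinh_half_div hs u)
    (fun u _ => abs_arctan_le _)
    (hint.congr_fun (fun u _ => by ring) measurableSet_Ioi)]
  simp only [zero_div, sinh_zero, arctan_zero, zero_add]
  simp_rw [mul_left_comm _ (s / 2), integral_const_mul, ← mul_div_assoc]
  ring

lemma integral_sinh_mul_heatKernelR_arcosh {t : ℝ} (ht : 0 < t) {s : ℝ} (hs : 0 < s) :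
    ∫ ρ in Ioi 0, sinh ρ * heatKernelR t (_root_.arcosh (1 + 2 * s ^ 2 * sinh ρ ^ 2))
      = t * exp (-t / 4) / (4 * π * t) ^ ((3 : ℝ) / 2) *
        ∫ u in Ioi 0, exp (-u ^ 2 / (4 * t)) * cosh (u / 2) / (sinh (u / 2) ^ 2 + s ^ 2) := by
  set C := √2 * exp (-t / 4) / (4 * π * t) ^ ((3 : ℝ) / 2) with hC
  set H : ℝ → ℝ → ℝ := fun ρ u =>
    sinh ρ * (u * exp (-u ^ 2 / (4 * t)) / √(cosh u - (1 + 2 * s ^ 2 * sinh ρ ^ 2))) with hH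
  have hsection : ∀ u ρ, H ρ u = u * exp (-u ^ 2 / (4 * t)) / √2 *
      (sinh ρ / √(sinh (u / 2) ^ 2 - (s * sinh ρ) ^ 2)) := by
    intro u ρ
    have h : cosh u - (1 + 2 * s ^ 2 * sinh ρ ^ 2)
        = 2 * (sinh (u / 2) ^ 2 - (s * sinh ρ) ^ 2) := by
      rw [cosh_eq_one_add_two_mul_sinh_half_sq]; ring
    simp only [hH]
    rw [h, sqrt_mul zero_le_two]
    ring
  have hinner : ∀ u ∈ Ioi (0 : ℝ), ∫ ρ in Ioi 0, H ρ u
      = u * exp (-u ^ 2 / (4 * t)) * arctan (sinh (u / 2) / s) / (√2 * s) := fun u hu => by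
    simp_rw [hsection u]
    rw [integral_const_mul, integral_sinh_div_sqrt hs (sinh_pos_iff.mpr (half_pos hu))]
    ring
  have hswap :
      ∫ ρ in Ioi 0, ∫ u in Ioi 0, H ρ u = ∫ u in Ioi 0, ∫ ρ in Ioi 0, H ρ u := by
    refine integral_integral_swap_of_nonneg
      (by fun_prop : Measurable (Function.uncurry H)).aestronglyMeasurable ?_ ?_ ?_
    · filter_upwards [ae_restrict_mem measurableSet_Ioi] with u hu
      filter_upwards [ae_restrict_mem measurableSet_Ioi] with ρ hρ
      exact mul_nonneg (sinh_nonneg_iff.mpr (le_of_lt hρ))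
        (div_nonneg (mul_nonneg (le_of_lt hu) (exp_pos _).le) (sqrt_nonneg _))
    · filter_upwards [ae_restrict_mem measurableSet_Ioi] with u hu
      simp_rw [hsection u]
      exact (integrableOn_sinh_div_sqrt hs (sinh_pos_iff.mpr (half_pos hu))).const_mul _
    · refine IntegrableOn.congr_fun ?_ (fun u hu => (hinner u hu).symm) measurableSet_Ioi
      exact (integrableOn_mul_exp_neg_sq_div_mul ht (by fun_prop : Continuous _).continuousOn
        (fun u _ => abs_arctan_le _)).div_const _
  calc ∫ ρ in Ioi 0, sinh ρ * heatKernelR t (_root_.arcosh (1 + 2 * s ^ 2 * sinh ρ ^ 2))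
      = ∫ ρ in Ioi 0, C * ∫ u in Ioi 0, H ρ u := by
        refine integral_congr_ae (Eventually.of_forall fun ρ => ?_)
        simp only [hH]
        rw [heatKernelR_arcosh (le_add_of_nonneg_right (by positivity)), integral_const_mul]
        ring
    _ = C * ∫ u in Ioi 0, ∫ ρ in Ioi 0, H ρ u := by rw [integral_const_mul, hswap]
    _ = C *
        ∫ u in Ioi 0, u * exp (-u ^ 2 / (4 * t)) * arctan (sinh (u / 2) / s) / (√2 * s) := by
        rw [setIntegral_congr_fun measurableSet_Ioi hinner]
    _ = _ := by
        rw [integral_div, integral_mul_exp_neg_sq_div_mul_arctan ht hs, hC]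
        field_simp

theorem integral_heatKernel_cone_general (q n : ℕ) (hn1 : 1 ≤ n)
    (hn2 : n ≤ q - 1) (t : ℝ) (ht : 0 < t) :
    (∫ θ in (0:ℝ)..(2 * π), ∫ ρ in Set.Ioi (0:ℝ),
        (q : ℝ)⁻¹ * Real.sinh ρ *
          heatKernelR t (_root_.arcosh (1 + 2 * Real.sin (n * π / q) ^ 2 * Real.sinh ρ ^ 2)))
      = Real.exp (-t / 4) / ((q : ℝ) * Real.sqrt (16 * π * t)) *
          ∫ u in Set.Ioi (0:ℝ),
            Real.exp (-u ^ 2 / (4 * t)) * Real.cosh (u / 2) /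
              (Real.sinh (u / 2) ^ 2 + Real.sin (n * π / q) ^ 2) := by
  have hn : (0 : ℝ) < n := by exact_mod_cast hn1
  have hnq : (n : ℝ) < q := by exact_mod_cast (by omega : n < q)
  have hs : 0 < sin (n * π / q) := by
    refine sin_pos_of_pos_of_lt_pi (div_pos (mul_pos hn pi_pos) (hn.trans hnq)) ?_
    rw [div_lt_iff₀ (hn.trans hnq), mul_comm]
    exact mul_lt_mul_of_pos_left hnq pi_pos
  have h32 : (4 * π * t) ^ ((3 : ℝ) / 2) = 4 * π * t * √(4 * π * t) := by
    rw [show (3 : ℝ) / 2 = 1 + 1 / 2 by norm_num, rpow_add (by positivity), rpow_one,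
      sqrt_eq_rpow]
  have h16 : √(16 * π * t) = 2 * √(4 * π * t) := by
    rw [show 16 * π * t = 2 ^ 2 * (4 * π * t) by ring, sqrt_mul (by positivity),
      sqrt_sq zero_le_two]
  simp_rw [mul_assoc (q : ℝ)⁻¹]
  rw [intervalIntegral.integral_const, integral_const_mul,
    integral_sinh_mul_heatKernelR_arcosh ht hs, sub_zero, smul_eq_mul, h32, h16]
  field_simp
  ring

/-- For `t > 0` and `1 ≤ n ≤ q−1`, the integral over the infinite hyperbolic cone
`C_q` of `K_ℍ(t, d(z, γ_qⁿ z)) dμ(z)`, with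
`d(z,γ_qⁿz) = arccosh(1 + 2sin²(nπ/q)sinh²ρ)` and `dμ = q⁻¹ sinh ρ dρ dθ`, equals
`(e^{−t/4}/(q√(16πt))) ∫₀^∞ e^{−u²/(4t)} cosh(u/2)/(sinh²(u/2)+sin²(nπ/q)) du`. -/
theorem integral_heatKernel_cone (q n : ℕ) (hq : 0 < q) (hn1 : 1 ≤ n)
    (hn2 : n ≤ q - 1) (t : ℝ) (ht : 0 < t) :
    (∫ θ in (0:ℝ)..(2 * π), ∫ ρ in Set.Ioi (0:ℝ),
        (q : ℝ)⁻¹ * Real.sinh ρ *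
          heatKernelR t (_root_.arcosh (1 + 2 * Real.sin (n * π / q) ^ 2 * Real.sinh ρ ^ 2)))
      = Real.exp (-t / 4) / ((q : ℝ) * Real.sqrt (16 * π * t)) *
          ∫ u in Set.Ioi (0:ℝ),
            Real.exp (-u ^ 2 / (4 * t)) * Real.cosh (u / 2) /
              (Real.sinh (u / 2) ^ 2 + Real.sin (n * π / q) ^ 2) :=
  integral_heatKernel_cone_general q n hn1 hn2 t ht
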